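/- The Bini degeneration: define T(ε) ∈ ((ℂ²⊗ℂ²))⊗³ as the sum of the five simple tensors (|01⟩+ε|11⟩)⊗|10⟩⊗(|01⟩+ε|00⟩) + |00⟩⊗(|00⟩+ε|01⟩)⊗(|10⟩+ε|00⟩) − |01⟩⊗(|00⟩+|10⟩+ε|11⟩)⊗|01⟩ − (|00⟩+|01⟩+ε|10⟩)⊗|00⟩⊗|10⟩ + (|01⟩+ε|10⟩)⊗(|00⟩+ε|11⟩)⊗(|01⟩+|10⟩). Then T(ε) = ε·β + O(ε²), where β = |00,00,00⟩ + |00,01,10⟩ + |01,10,00⟩ + |10,00,01⟩ + |01,11,10⟩ + |11,10,01⟩ is the Bini tensor. In particular the border rank of β is at most 5, while β is a sum of 6 simple tensors. -/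
import Mathlib


open TensorProduct

/-- Basis vector `|ab⟩` of `ℂ²⊗ℂ²` realized as `Fin 2 × Fin 2 → ℂ`. -/
noncomputable def bb (a b : Fin 2) : Fin 2 × Fin 2 → ℂ := Pi.single (a, b) 1

noncomputable abbrev B2 := Fin 2 × Fin 2 → ℂ

/-- The Bini degeneration: a curve of sums of five simple tensors. -/
noncomputable def biniCurve (ε : ℂ) : B2 ⊗[ℂ] (B2 ⊗[ℂ] B2) :=
  (bb 0 1 + ε • bb 1 1) ⊗ₜ[ℂ] (bb 1 0 ⊗ₜ[ℂ] (bb 0 1 + ε • bb 0 0))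
  + bb 0 0 ⊗ₜ[ℂ] ((bb 0 0 + ε • bb 0 1) ⊗ₜ[ℂ] (bb 1 0 + ε • bb 0 0))
  - bb 0 1 ⊗ₜ[ℂ] ((bb 0 0 + bb 1 0 + ε • bb 1 1) ⊗ₜ[ℂ] bb 0 1)
  - (bb 0 0 + bb 0 1 + ε • bb 1 0) ⊗ₜ[ℂ] (bb 0 0 ⊗ₜ[ℂ] bb 1 0)
  + (bb 0 1 + ε • bb 1 0) ⊗ₜ[ℂ] ((bb 0 0 + ε • bb 1 1) ⊗ₜ[ℂ] (bb 0 1 + bb 1 0))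

/-- The Bini tensor `β`, a sum of six simple tensors. -/
noncomputable def biniTensor : B2 ⊗[ℂ] (B2 ⊗[ℂ] B2) :=
  bb 0 0 ⊗ₜ[ℂ] (bb 0 0 ⊗ₜ[ℂ] bb 0 0) + bb 0 0 ⊗ₜ[ℂ] (bb 0 1 ⊗ₜ[ℂ] bb 1 0)
  + bb 0 1 ⊗ₜ[ℂ] (bb 1 0 ⊗ₜ[ℂ] bb 0 0) + bb 1 0 ⊗ₜ[ℂ] (bb 0 0 ⊗ₜ[ℂ] bb 0 1)
  + bb 0 1 ⊗ₜ[ℂ] (bb 1 1 ⊗ₜ[ℂ] bb 1 0) + bb 1 1 ⊗ₜ[ℂ] (bb 1 0 ⊗ₜ[ℂ] bb 0 1)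

/-- The `ε²` coefficient of the Bini curve. -/
noncomputable def biniE : B2 ⊗[ℂ] (B2 ⊗[ℂ] B2) :=
  bb 1 1 ⊗ₜ[ℂ] (bb 1 0 ⊗ₜ[ℂ] bb 0 0) + bb 0 0 ⊗ₜ[ℂ] (bb 0 1 ⊗ₜ[ℂ] bb 0 0)
  + bb 1 0 ⊗ₜ[ℂ] (bb 1 1 ⊗ₜ[ℂ] bb 0 1) + bb 1 0 ⊗ₜ[ℂ] (bb 1 1 ⊗ₜ[ℂ] bb 1 0)

/-- The Bini degeneration `T(ε) = ε·β + O(ε²)`: the five-term curve `T(ε)`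
degenerates to the Bini tensor `β`, so the border rank of `β` is at most 5, while
`β` is a sum of 6 simple tensors. -/
theorem bini_degeneration :
    (∃ E : ℂ → B2 ⊗[ℂ] (B2 ⊗[ℂ] B2),
        ∀ ε : ℂ, biniCurve ε = ε • biniTensor + ε ^ 2 • E ε) ∧
    (∃ a b c : Fin 6 → B2, biniTensor = ∑ i, a i ⊗ₜ[ℂ] (b i ⊗ₜ[ℂ] c i)) := by
  constructor
  · refine ⟨fun _ => biniE, fun ε => ?_⟩
    simp only [biniCurve, biniTensor, biniE, add_tmul, tmul_add, tmul_smul,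
      ← smul_tmul', smul_add, smul_smul, sub_eq_add_neg]
    module
  · refine ⟨![bb 0 0, bb 0 0, bb 0 1, bb 1 0, bb 0 1, bb 1 1],
      ![bb 0 0, bb 0 1, bb 1 0, bb 0 0, bb 1 1, bb 1 0],
      ![bb 0 0, bb 1 0, bb 0 0, bb 0 1, bb 1 0, bb 0 1], ?_⟩
    simp [biniTensor, Fin.sum_univ_six, Matrix.cons_val_succ, Matrix.cons_val_zero,
      show (5 : Fin 6) = Fin.succ 4 from rfl]
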